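/- Let s > 1/2. There exists a constant C(s) > 0 such that for all F, G ∈ L^{2,s}(ℝ), the kernel K(z,λ) := 1_{(−∞,0)}(z) ∫₀^∞ F(z − u) G(u − λ) du belongs to L²(ℝ × ℝ) and ‖K‖_{L²(ℝ×ℝ)} ≤ C(s) ‖F‖_{L^{2,s}(ℝ)} ‖G‖_{L^{2,s}(ℝ)}. In particular, the integral operator on L²(ℝ) with kernel K is Hilbert–Schmidt, hence compact. -/

import Mathlib

/-!
Write `f = |F|`, `g = |G|`. Cauchy–Schwarz against the measure `g(u - λ) du` gives
`|K(z,λ)|² ≤ ‖g‖₁ ∫_{u>0} f(z-u)² g(u-λ) du`; integrating in `λ` and then over `z < 0`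
yields `‖K‖₂² ≤ ‖g‖₁² ∫ (-t)₊ f(t)² dt`. For `s ≥ 1/2` one has `(-t)₊ ≤ ⟨t⟩^{2s}`, and
Cauchy–Schwarz again gives `‖g‖₁² ≤ (∫ ⟨x⟩^{-2s} dx) ‖⟨·⟩^s g‖₂²`, where the first factor is
finite because `2s > 1`. Hence one may take `C(s)² = ∫ ⟨x⟩^{-2s} dx`.
-/

open MeasureTheory Filter Set
open scoped Topology ENNReal

noncomputable section

/-- The weighted `L^{2,s}` norm `‖⟨·⟩^s f‖_{L²}` (as a real number). -/
def L2sNorm (s : ℝ) (f : ℝ → ℂ) : ℝ :=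
  (eLpNorm (fun x : ℝ => ((1 + x ^ 2) ^ (s / 2) : ℝ) • f x) 2 (volume : Measure ℝ)).toReal

/-- Membership in the weighted space `L^{2,s}(ℝ)`: `f` measurable with `⟨·⟩^s f ∈ L²`. -/
def MemL2s (s : ℝ) (f : ℝ → ℂ) : Prop :=
  Measurable f ∧
    MemLp (fun x : ℝ => ((1 + x ^ 2) ^ (s / 2) : ℝ) • f x) 2 (volume : Measure ℝ)

/-- The kernel `K(z,λ) = 1_{(−∞,0)}(z) ∫₀^∞ F(z − u) G(u − λ) du`. -/
def Kern (F G : ℝ → ℂ) (p : ℝ × ℝ) : ℂ :=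
  if p.1 < 0 then ∫ u in Set.Ioi (0 : ℝ), F (p.1 - u) * G (u - p.2) else 0

namespace ENNReal

variable {α : Type*} [MeasurableSpace α] {μ : Measure α}

theorem lintegral_mul_sq_le_lintegral_mul_lintegral_sq_mul {φ ψ : α → ℝ≥0∞}
    (hφ : AEMeasurable φ μ) (hψ : AEMeasurable ψ μ) :
    (∫⁻ a, φ a * ψ a ∂μ) ^ 2 ≤ (∫⁻ a, ψ a ∂μ) * ∫⁻ a, φ a ^ 2 * ψ a ∂μ := by
  have rpow_half_sq (x : ℝ≥0∞) : (x ^ (2⁻¹ : ℝ)) ^ 2 = x := by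
    rw [← ENNReal.rpow_natCast, ← ENNReal.rpow_mul]; norm_num
  have hHolder := ENNReal.lintegral_mul_le_Lp_mul_Lq μ .two_two
    (hφ.mul (hψ.pow_const (2⁻¹ : ℝ))) (hψ.pow_const (2⁻¹ : ℝ))
  simp only [Pi.mul_apply, mul_assoc, ← sq, mul_pow, rpow_ofNat, rpow_half_sq] at hHolder
  calc (∫⁻ a, φ a * ψ a ∂μ) ^ 2
      ≤ ((∫⁻ a, φ a ^ 2 * ψ a ∂μ) ^ (1 / 2 : ℝ) * (∫⁻ a, ψ a ∂μ) ^ (1 / 2 : ℝ)) ^ 2 := by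
        gcongr
    _ = (∫⁻ a, ψ a ∂μ) * ∫⁻ a, φ a ^ 2 * ψ a ∂μ := by
        rw [one_div, mul_pow, rpow_half_sq, rpow_half_sq, mul_comm]

theorem lintegral_sq_le_lintegral_inv_mul {g w : α → ℝ≥0∞} (hg : AEMeasurable g μ)
    (hw : AEMeasurable w μ) (hw0 : ∀ a, w a ≠ 0) (hwtop : ∀ a, w a ≠ ⊤) :
    (∫⁻ a, g a ∂μ) ^ 2 ≤ (∫⁻ a, (w a)⁻¹ ∂μ) * ∫⁻ a, w a * g a ^ 2 ∂μ := by
  have hcancel (a : α) : w a * (w a)⁻¹ = 1 := ENNReal.mul_inv_cancel (hw0 a) (hwtop a)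
  calc (∫⁻ a, g a ∂μ) ^ 2 = (∫⁻ a, w a * g a * (w a)⁻¹ ∂μ) ^ 2 := by
        refine congrArg (· ^ 2) (lintegral_congr fun a => ?_)
        rw [mul_right_comm, hcancel, one_mul]
    _ ≤ (∫⁻ a, (w a)⁻¹ ∂μ) * ∫⁻ a, (w a * g a) ^ 2 * (w a)⁻¹ ∂μ :=
        lintegral_mul_sq_le_lintegral_mul_lintegral_sq_mul (hw.mul hg) hw.inv
    _ = (∫⁻ a, (w a)⁻¹ ∂μ) * ∫⁻ a, w a * g a ^ 2 ∂μ := by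
        congr 1
        refine lintegral_congr fun a => ?_
        rw [(by ring : (w a * g a) ^ 2 * (w a)⁻¹ = w a * g a ^ 2 * (w a * (w a)⁻¹)), hcancel,
          mul_one]

end ENNReal

section Translation

variable {G : Type*} [MeasurableSpace G] [AddGroup G] [MeasurableAdd₂ G] [MeasurableNeg G]
  {μ : Measure G} [SFinite μ] [μ.IsAddLeftInvariant] [μ.IsAddRightInvariant] [μ.IsNegInvariant]

theorem lintegral_sq_setLIntegral_mul_sub_le {φ g : G → ℝ≥0∞} (hφ : Measurable φ)
    (hg : Measurable g) (s : Set G) :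
    ∫⁻ l, (∫⁻ u in s, φ u * g (u - l) ∂μ) ^ 2 ∂μ ≤
      (∫⁻ x, g x ∂μ) ^ 2 * ∫⁻ u in s, φ u ^ 2 ∂μ := by
  have hmeas : Measurable fun p : G × G => φ p.2 ^ 2 * g (p.2 - p.1) := by fun_prop
  have htranslate (l : G) : ∫⁻ u in s, g (u - l) ∂μ ≤ ∫⁻ x, g x ∂μ :=
    (setLIntegral_le_lintegral _ _).trans_eq (lintegral_sub_right_eq_self g l)
  calc ∫⁻ l, (∫⁻ u in s, φ u * g (u - l) ∂μ) ^ 2 ∂μ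
      ≤ ∫⁻ l, (∫⁻ x, g x ∂μ) * ∫⁻ u in s, φ u ^ 2 * g (u - l) ∂μ ∂μ := by
        refine lintegral_mono fun l => ?_
        refine (ENNReal.lintegral_mul_sq_le_lintegral_mul_lintegral_sq_mul hφ.aemeasurable
          (hg.comp (measurable_id.sub_const l)).aemeasurable).trans ?_
        gcongr ?_ * _
        exact htranslate l
    _ = (∫⁻ x, g x ∂μ) * ∫⁻ u in s, ∫⁻ l, φ u ^ 2 * g (u - l) ∂μ ∂μ := by
        have hinner : Measurable fun l => ∫⁻ u in s, φ u ^ 2 * g (u - l) ∂μ :=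
          hmeas.lintegral_prod_right'
        rw [lintegral_const_mul _ hinner, lintegral_lintegral_swap hmeas.aemeasurable]
    _ = (∫⁻ x, g x ∂μ) ^ 2 * ∫⁻ u in s, φ u ^ 2 ∂μ := by
        have hreflect (u : G) : ∫⁻ l, φ u ^ 2 * g (u - l) ∂μ = φ u ^ 2 * ∫⁻ x, g x ∂μ := by
          rw [lintegral_const_mul _ (f := fun l => g (u - l)) (by fun_prop),
            lintegral_sub_left_eq_self]
        simp_rw [hreflect, lintegral_mul_const _ (hφ.pow_const 2)]
        ring

end Translation

theorem setLIntegral_Iio_setLIntegral_Ioi_sub {h : ℝ → ℝ≥0∞} (hh : Measurable h) :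
    ∫⁻ z in Iio 0, ∫⁻ u in Ioi 0, h (z - u) = ∫⁻ t, ENNReal.ofReal (-t) * h t := by
  have hsubst (z : ℝ) : ∫⁻ u in Ioi 0, h (z - u) = ∫⁻ t in Iio z, h t := by
    have hpre : (fun u => z - u) ⁻¹' Iio z = Ioi 0 := by ext u; simp
    rw [← hpre, (Measure.measurePreserving_sub_left volume z).setLIntegral_comp_preimage
      measurableSet_Iio hh]
  have hmeas : Measurable fun p : ℝ × ℝ => if p.2 < p.1 then h p.2 else 0 :=
    Measurable.ite (measurableSet_lt measurable_snd measurable_fst) (hh.comp measurable_snd)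
      measurable_const
  calc ∫⁻ z in Iio 0, ∫⁻ u in Ioi 0, h (z - u)
      = ∫⁻ z in Iio 0, ∫⁻ t, if t < z then h t else 0 := by
        refine lintegral_congr fun z => ?_
        rw [hsubst, ← lintegral_indicator measurableSet_Iio]
        simp only [indicator_apply, mem_Iio]
    _ = ∫⁻ t, ∫⁻ z in Iio 0, if t < z then h t else 0 :=
        lintegral_lintegral_swap hmeas.aemeasurable
    _ = ∫⁻ t, ENNReal.ofReal (-t) * h t := by
        refine lintegral_congr fun t => ?_
        have hind : (fun z => if t < z then h t else 0) = (Ioi t).indicator fun _ => h t := by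
          ext z; simp [indicator_apply]
        rw [hind, lintegral_indicator_const measurableSet_Ioi, Measure.restrict_apply
          measurableSet_Ioi, Ioi_inter_Iio, Real.volume_Ioo, zero_sub, mul_comm]

theorem setLIntegral_Iio_lintegral_sq_le {f g w : ℝ → ℝ≥0∞} (hf : Measurable f)
    (hg : Measurable g) (hw : Measurable w) (hw0 : ∀ x, w x ≠ 0) (hwtop : ∀ x, w x ≠ ⊤)
    (hw_ge : ∀ t, ENNReal.ofReal (-t) ≤ w t) :
    ∫⁻ z in Iio 0, ∫⁻ l, (∫⁻ u in Ioi 0, f (z - u) * g (u - l)) ^ 2 ≤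
      (∫⁻ x, (w x)⁻¹) * (∫⁻ x, w x * g x ^ 2) * ∫⁻ x, w x * f x ^ 2 := by
  have hinner : Measurable fun z => ∫⁻ u in Ioi 0, f (z - u) ^ 2 :=
    Measurable.lintegral_prod_right' (f := fun p : ℝ × ℝ => f (p.1 - p.2) ^ 2) (by fun_prop)
  calc ∫⁻ z in Iio 0, ∫⁻ l, (∫⁻ u in Ioi 0, f (z - u) * g (u - l)) ^ 2
      ≤ ∫⁻ z in Iio 0, (∫⁻ x, g x) ^ 2 * ∫⁻ u in Ioi 0, f (z - u) ^ 2 :=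
        lintegral_mono fun z => lintegral_sq_setLIntegral_mul_sub_le (by fun_prop) hg _
    _ = (∫⁻ x, g x) ^ 2 * ∫⁻ t, ENNReal.ofReal (-t) * f t ^ 2 := by
        rw [lintegral_const_mul _ hinner, setLIntegral_Iio_setLIntegral_Ioi_sub (hf.pow_const 2)]
    _ ≤ (∫⁻ x, g x) ^ 2 * ∫⁻ x, w x * f x ^ 2 := by
        gcongr with t
        exact hw_ge t
    _ ≤ (∫⁻ x, (w x)⁻¹) * (∫⁻ x, w x * g x ^ 2) * ∫⁻ x, w x * f x ^ 2 := by
        gcongr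
        exact ENNReal.lintegral_sq_le_lintegral_inv_mul hg.aemeasurable hw.aemeasurable hw0 hwtop

theorem eLpNorm_two_sq {α E : Type*} [MeasurableSpace α] [NormedAddCommGroup E] (μ : Measure α)
    (f : α → E) : eLpNorm f 2 μ ^ 2 = ∫⁻ x, ‖f x‖ₑ ^ 2 ∂μ := by
  simpa using eLpNorm_nnreal_pow_eq_lintegral (f := f) (μ := μ) (p := 2) two_ne_zero

theorem neg_le_one_add_sq_rpow {s : ℝ} (hs : 1 / 2 ≤ s) (t : ℝ) : -t ≤ (1 + t ^ 2) ^ s :=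
  calc -t ≤ |t| := neg_le_abs t
    _ ≤ √(1 + t ^ 2) := Real.abs_le_sqrt (by linarith)
    _ = (1 + t ^ 2) ^ (1 / 2 : ℝ) := Real.sqrt_eq_rpow _
    _ ≤ (1 + t ^ 2) ^ s := Real.rpow_le_rpow_of_exponent_le (by nlinarith) hs

theorem integrable_one_add_sq_rpow_neg {s : ℝ} (hs : 1 / 2 < s) :
    Integrable fun x : ℝ => (1 + x ^ 2) ^ (-s) := by
  have h := integrable_rpow_neg_one_add_norm_sq (E := ℝ) (μ := volume) (r := 2 * s)
    (by simp only [Module.finrank_self, Nat.cast_one]; linarith)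
  simpa [show -(2 * s) / 2 = -s by ring] using h

theorem integral_one_add_sq_rpow_neg_pos {s : ℝ} (hs : 1 / 2 < s) :
    0 < ∫ x : ℝ, (1 + x ^ 2) ^ (-s) := by
  refine (integral_pos_iff_support_of_nonneg (fun x => by positivity)
    (integrable_one_add_sq_rpow_neg hs)).2 ?_
  have hsupport : Function.support (fun x : ℝ => (1 + x ^ 2) ^ (-s)) = univ :=
    Function.support_eq_univ fun x => (Real.rpow_pos_of_pos (by positivity) _).ne'
  simp [hsupport]

theorem enorm_one_add_sq_rpow_smul_sq {E : Type*} [NormedAddCommGroup E] [NormedSpace ℝ E]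
    (s x : ℝ) (v : E) :
    ‖((1 + x ^ 2) ^ (s / 2) : ℝ) • v‖ₑ ^ 2 = ENNReal.ofReal ((1 + x ^ 2) ^ s) * ‖v‖ₑ ^ 2 := by
  have hpos : 0 < 1 + x ^ 2 := by positivity
  rw [enorm_smul, mul_pow, Real.enorm_eq_ofReal (by positivity), ← ENNReal.ofReal_pow
    (by positivity), ← Real.rpow_natCast, ← Real.rpow_mul hpos.le]
  norm_num

theorem L2sNorm_nonneg (s : ℝ) (F : ℝ → ℂ) : 0 ≤ L2sNorm s F := ENNReal.toReal_nonneg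

theorem ofReal_L2sNorm_sq {s : ℝ} {F : ℝ → ℂ} (hF : MemL2s s F) :
    ENNReal.ofReal (L2sNorm s F) ^ 2 = ∫⁻ x, ENNReal.ofReal ((1 + x ^ 2) ^ s) * ‖F x‖ₑ ^ 2 := by
  simp_rw [L2sNorm, ENNReal.ofReal_toReal hF.2.eLpNorm_ne_top, eLpNorm_two_sq,
    enorm_one_add_sq_rpow_smul_sq]

theorem measurable_kern {F G : ℝ → ℂ} (hF : Measurable F) (hG : Measurable G) :
    Measurable (Kern F G) := by
  have hintegrand : StronglyMeasurable fun q : (ℝ × ℝ) × ℝ => F (q.1.1 - q.2) * G (q.2 - q.1.2) :=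
    (by fun_prop : Measurable fun q : (ℝ × ℝ) × ℝ => F (q.1.1 - q.2) * G (q.2 - q.1.2))
      |>.stronglyMeasurable
  exact Measurable.ite (measurableSet_lt measurable_fst measurable_const)
    hintegrand.integral_prod_right'.measurable measurable_const

theorem lintegral_enorm_kern_sq_le (F G : ℝ → ℂ) :
    ∫⁻ p, ‖Kern F G p‖ₑ ^ 2 ≤
      ∫⁻ z in Iio 0, ∫⁻ l, (∫⁻ u in Ioi 0, ‖F (z - u)‖ₑ * ‖G (u - l)‖ₑ) ^ 2 := by
  rw [← lintegral_indicator measurableSet_Iio, Measure.volume_eq_prod]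
  refine (lintegral_prod_le _).trans (lintegral_mono fun z => ?_)
  by_cases hz : z < 0
  · rw [indicator_of_mem (mem_Iio.mpr hz)]
    refine lintegral_mono fun l => ?_
    rw [Kern, if_pos hz]
    gcongr
    refine (enorm_integral_le_lintegral_enorm _).trans_eq ?_
    simp_rw [enorm_mul]
  · simp [Kern, hz]

theorem lintegral_enorm_kern_sq_le_weighted {s : ℝ} (hs : 1 / 2 ≤ s) {F G : ℝ → ℂ}
    (hF : Measurable F) (hG : Measurable G) :
    ∫⁻ p, ‖Kern F G p‖ₑ ^ 2 ≤
      (∫⁻ x, ENNReal.ofReal ((1 + x ^ 2) ^ (-s))) *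
        (∫⁻ x, ENNReal.ofReal ((1 + x ^ 2) ^ s) * ‖G x‖ₑ ^ 2) *
          ∫⁻ x, ENNReal.ofReal ((1 + x ^ 2) ^ s) * ‖F x‖ₑ ^ 2 := by
  have hinv (x : ℝ) :
      ENNReal.ofReal ((1 + x ^ 2) ^ (-s)) = (ENNReal.ofReal ((1 + x ^ 2) ^ s))⁻¹ := by
    rw [Real.rpow_neg (by positivity), ENNReal.ofReal_inv_of_pos (by positivity)]
  simp_rw [hinv]
  exact (lintegral_enorm_kern_sq_le F G).trans <| setLIntegral_Iio_lintegral_sq_le hF.enorm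
    hG.enorm (by fun_prop) (fun x => (ENNReal.ofReal_pos.2 (by positivity)).ne')
    (fun _ => ENNReal.ofReal_ne_top)
    (fun t => ENNReal.ofReal_le_ofReal (neg_le_one_add_sq_rpow hs t))

/-- For `s > 1/2` there is `C(s) > 0` such that for all
`F, G ∈ L^{2,s}(ℝ)` the kernel `K(z,λ) = 1_{(−∞,0)}(z)∫₀^∞ F(z−u)G(u−λ)du` lies in
`L²(ℝ×ℝ)` with `‖K‖_{L²(ℝ×ℝ)} ≤ C(s)‖F‖_{L^{2,s}}‖G‖_{L^{2,s}}` (hence the corresponding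
integral operator is Hilbert–Schmidt, and compact). -/
theorem hilbert_schmidt_kernel_bound (s : ℝ) (hs : 1 / 2 < s) :
    ∃ C > (0 : ℝ), ∀ F G : ℝ → ℂ, MemL2s s F → MemL2s s G →
      MemLp (Kern F G) 2 (volume : Measure (ℝ × ℝ)) ∧
      eLpNorm (Kern F G) 2 (volume : Measure (ℝ × ℝ)) ≤
        ENNReal.ofReal (C * L2sNorm s F * L2sNorm s G) := by
  set I := ∫ x : ℝ, (1 + x ^ 2) ^ (-s)
  have hIpos : 0 < I := integral_one_add_sq_rpow_neg_pos hs
  have hI : ∫⁻ x, ENNReal.ofReal ((1 + x ^ 2) ^ (-s)) = ENNReal.ofReal I :=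
    (ofReal_integral_eq_lintegral_ofReal (integrable_one_add_sq_rpow_neg hs)
      (ae_of_all _ fun x => by positivity)).symm
  refine ⟨√I, Real.sqrt_pos.2 hIpos, fun F G hF hG => ?_⟩
  have hbound : eLpNorm (Kern F G) 2 volume ≤ ENNReal.ofReal (√I * L2sNorm s F * L2sNorm s G) := by
    refine (ENNReal.pow_le_pow_left_iff two_ne_zero).1 ?_
    calc eLpNorm (Kern F G) 2 volume ^ 2 = ∫⁻ p, ‖Kern F G p‖ₑ ^ 2 := eLpNorm_two_sq _ _
      _ ≤ ENNReal.ofReal I * ENNReal.ofReal (L2sNorm s G) ^ 2 *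
          ENNReal.ofReal (L2sNorm s F) ^ 2 := by
        rw [← hI, ofReal_L2sNorm_sq hF, ofReal_L2sNorm_sq hG]
        exact lintegral_enorm_kern_sq_le_weighted hs.le hF.1 hG.1
      _ = ENNReal.ofReal (√I * L2sNorm s F * L2sNorm s G) ^ 2 := by
        rw [ENNReal.ofReal_mul (mul_nonneg (Real.sqrt_nonneg I) (L2sNorm_nonneg s F)),
          ENNReal.ofReal_mul (Real.sqrt_nonneg I), mul_pow, mul_pow,
          ← ENNReal.ofReal_pow (Real.sqrt_nonneg I), Real.sq_sqrt hIpos.le, mul_right_comm]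
  exact ⟨⟨(measurable_kern hF.1 hG.1).aestronglyMeasurable, hbound.trans_lt ENNReal.ofReal_lt_top⟩,
    hbound⟩
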